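/- Size-biased sampling with arbitrary extra weights: let ν₀ be a Borel probability measure on (0,∞) with finite expectation m, and let ν be its size-biased version, defined by ν(A) = (1/m) ∫_A t dν₀(t) for Borel A ⊂ (0,∞). Let (p^n)_{n≥1} be a proper sequence of probability vectors, i.e. each p^n = (p^n_1,...,p^n_{N_n}) has nonnegative entries summing to 1 and max{p^n_j : 1 ≤ j ≤ N_n} → 0 as n → ∞. For each n let Z_1,...,Z_{N_n} be independent random variables each with law ν₀, and let η_n be the Borel probability measure on (0,∞) defined by η_n(B) = E[ (Σ_{j=1}^{N_n} p^n_j Z_j 1_B(Z_j)) / (Σ_{j=1}^{N_n} p^n_j Z_j) ] (this is the law of the size-biased random choice from Z_1,...,Z_{N_n} with extra weights p^n_1,...,p^n_{N_n}). Then η_n converges weakly to ν. -/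

import Mathlib

/-!
With `U_n = ∑ p_j Z_j g(Z_j)` and `S_n = ∑ p_j Z_j`, the integral in question is `E[U_n / S_n]`.
A weighted law of large numbers in `L¹` gives `U_n → ∫ t g(t) dν₀` and `S_n → m` in `L¹`: after
truncating, `Var(∑ p_j Y_j) = (∑ p_j²) Var Y ≤ (max_j p_j) Var Y → 0`. Since `|U_n| ≤ C S_n`, the
ratio is bounded by `C`, and `|U/S - a/m| ≤ (|U - a| + C |S - m|) / m` turns the two `L¹`
limits into convergence of `E[U_n / S_n]`.
-/

open MeasureTheory Filter Set ProbabilityTheory Topology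

lemma sq_integral_abs_sub_integral_le_variance {Ω : Type*} [MeasurableSpace Ω] {P : Measure Ω}
    [IsProbabilityMeasure P] {X : Ω → ℝ} (hX : MemLp X 2 P) :
    (∫ ω, |X ω - P[X]| ∂P) ^ 2 ≤ Var[X; P] := by
  have hY : MemLp (fun ω => |X ω - P[X]|) 2 P := (hX.sub (memLp_const _)).abs
  have h := variance_nonneg (fun ω => |X ω - P[X]|) P
  rw [variance_eq_sub hY] at h
  rw [variance_eq_integral hX.aemeasurable]
  simpa [sq_abs] using h

lemma tendsto_integral_abs_sub_truncation {α : Type*} [MeasurableSpace α] {μ : Measure α}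
    {f : α → ℝ} (hf : Integrable f μ) :
    Tendsto (fun A => ∫ t, |f t - truncation f A t| ∂μ) atTop (𝓝 0) := by
  have hlim := tendsto_integral_filter_of_dominated_convergence (l := atTop) (μ := μ)
    (F := fun A t => |f t - truncation f A t|) (f := fun _ => 0) (fun t => 2 * |f t|)
    (Eventually.of_forall fun A => (hf.1.sub hf.1.truncation).norm) ?_ (hf.abs.const_mul 2) ?_
  · simpa using hlim
  · refine Eventually.of_forall fun A => ae_of_all _ fun t => ?_
    rw [Real.norm_eq_abs, abs_abs, two_mul]
    exact (abs_sub _ _).trans (add_le_add le_rfl (abs_truncation_le_abs_self f A t))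
  · refine ae_of_all _ fun t => tendsto_const_nhds.congr' ?_
    filter_upwards [Ioi_mem_atTop |f t|] with A hA
    simp [truncation_eq_self hA]

section WeightedSampleMean

variable {α ι : Type*} [MeasurableSpace α] [Fintype ι] {μ : Measure α} [IsProbabilityMeasure μ]
  {p : ι → ℝ}

lemma integrable_weighted_sum_comp_eval {f : α → ℝ} (hf : Integrable f μ) :
    Integrable (fun z : ι → α => ∑ j, p j * f (z j)) (Measure.pi fun _ => μ) :=
  integrable_finsetSum _ fun _ _ => (integrable_comp_eval hf).const_mul _

lemma integral_weighted_sum_comp_eval (hp1 : ∑ j, p j = 1) {f : α → ℝ} (hf : Integrable f μ) :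
    ∫ z, ∑ j, p j * f (z j) ∂(Measure.pi fun _ : ι => μ) = ∫ t, f t ∂μ := by
  rw [integral_finsetSum _ fun _ _ => (integrable_comp_eval hf).const_mul _]
  calc ∑ j, ∫ z, p j * f (z j) ∂(Measure.pi fun _ : ι => μ) = ∑ j, p j * ∫ t, f t ∂μ :=
        Finset.sum_congr rfl fun j _ => by rw [integral_const_mul, integral_comp_eval hf.1]
    _ = ∫ t, f t ∂μ := by rw [← Finset.sum_mul, hp1, one_mul]

lemma integral_abs_weighted_sum_sub_le_of_abs_le (hp0 : ∀ j, 0 ≤ p j) (hp1 : ∑ j, p j = 1)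
    {δ : ℝ} (hpδ : ∀ j, p j ≤ δ) {f : α → ℝ} {K : ℝ} (hf : AEStronglyMeasurable f μ)
    (hfK : ∀ t, |f t| ≤ K) :
    ∫ z, |∑ j, p j * f (z j) - ∫ t, f t ∂μ| ∂(Measure.pi fun _ : ι => μ) ≤ K * √δ := by
  have hK : 0 ≤ K := (abs_nonneg _).trans (hfK (nonempty_of_isProbabilityMeasure μ).some)
  obtain ⟨j₀⟩ : Nonempty ι := Finset.univ_nonempty_iff.1 <|
    Finset.nonempty_of_sum_ne_zero (by rw [hp1]; exact one_ne_zero)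
  have hδ : 0 ≤ δ := (hp0 j₀).trans (hpδ j₀)
  have hfL2 : MemLp f 2 μ := MemLp.of_bound hf K (ae_of_all _ hfK)
  have hfL1 : Integrable f μ := hfL2.integrable one_le_two
  have hvar_f : Var[f; μ] ≤ K ^ 2 := by
    have := variance_le_sq_of_bounded (a := -K) (b := K)
      (ae_of_all _ fun t => abs_le.1 (hfK t)) hf.aemeasurable
    rwa [show (K - -K) / 2 = K by ring] at this
  set S : (ι → α) → ℝ := ∑ j, fun z => p j * f (z j) with hS
  have hS_apply : ∀ z, S z = ∑ j, p j * f (z j) := fun z => by simp only [hS, Finset.sum_apply]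
  have hvar_S : Var[S; Measure.pi fun _ => μ] ≤ δ * K ^ 2 := by
    rw [hS, variance_sum_pi fun _ => hfL2.const_mul _]
    calc ∑ j, Var[fun t => p j * f t; μ] = ∑ j, p j * p j * Var[f; μ] := by
          simp_rw [variance_const_mul, sq]
      _ ≤ ∑ j, δ * p j * K ^ 2 := by
          refine Finset.sum_le_sum fun j _ => mul_le_mul ?_ hvar_f (variance_nonneg _ _) ?_
          · exact mul_le_mul_of_nonneg_right (hpδ j) (hp0 j)
          · exact mul_nonneg hδ (hp0 j)
      _ = δ * K ^ 2 := by rw [← Finset.sum_mul, ← Finset.mul_sum, hp1, mul_one]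
  have hmean : (Measure.pi fun _ => μ)[S] = ∫ t, f t ∂μ := by
    simp_rw [hS_apply]; exact integral_weighted_sum_comp_eval hp1 hfL1
  have hSL2 : MemLp S 2 (Measure.pi fun _ => μ) := memLp_finsetSum' _ fun j _ =>
    (hfL2.comp_measurePreserving (measurePreserving_eval _ j)).const_mul (p j)
  have hL1 := sq_integral_abs_sub_integral_le_variance hSL2
  rw [hmean] at hL1
  simp_rw [hS_apply] at hL1
  calc _ ≤ √(δ * K ^ 2) := Real.le_sqrt_of_sq_le (hL1.trans hvar_S)
    _ = K * √δ := by rw [Real.sqrt_mul hδ, Real.sqrt_sq hK, mul_comm]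

lemma integral_abs_weighted_sum_sub_le_add (hp0 : ∀ j, 0 ≤ p j) (hp1 : ∑ j, p j = 1)
    {f f' : α → ℝ} (hf : Integrable f μ) (hf' : Integrable f' μ) :
    ∫ z, |∑ j, p j * f (z j) - ∫ t, f t ∂μ| ∂(Measure.pi fun _ : ι => μ) ≤
      ∫ z, |∑ j, p j * f' (z j) - ∫ t, f' t ∂μ| ∂(Measure.pi fun _ : ι => μ) +
        2 * ∫ t, |f t - f' t| ∂μ := by
  have hdiff : Integrable (fun t => |f t - f' t|) μ := (hf.sub hf').abs
  have hpoint : ∀ z : ι → α, |∑ j, p j * f (z j) - ∫ t, f t ∂μ| ≤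
      |∑ j, p j * f' (z j) - ∫ t, f' t ∂μ| +
        (∑ j, p j * |f (z j) - f' (z j)| + ∫ t, |f t - f' t| ∂μ) := by
    intro z
    have hsum : |∑ j, p j * f (z j) - ∑ j, p j * f' (z j)| ≤ ∑ j, p j * |f (z j) - f' (z j)| := by
      rw [← Finset.sum_sub_distrib]
      refine (Finset.abs_sum_le_sum_abs _ _).trans_eq (Finset.sum_congr rfl fun j _ => ?_)
      rw [← mul_sub, abs_mul, abs_of_nonneg (hp0 j)]
    have hmean : |∫ t, f t ∂μ - ∫ t, f' t ∂μ| ≤ ∫ t, |f t - f' t| ∂μ := by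
      rw [← integral_sub hf hf']; exact abs_integral_le_integral_abs
    have htri := abs_sub_abs_le_abs_sub (∑ j, p j * f (z j) - ∫ t, f t ∂μ)
      (∑ j, p j * f' (z j) - ∫ t, f' t ∂μ)
    rw [sub_sub_sub_comm] at htri
    linarith [abs_sub (∑ j, p j * f (z j) - ∑ j, p j * f' (z j)) (∫ t, f t ∂μ - ∫ t, f' t ∂μ)]
  have hI' : Integrable (fun z : ι → α => |∑ j, p j * f' (z j) - ∫ t, f' t ∂μ|)
      (Measure.pi fun _ => μ) :=
    ((integrable_weighted_sum_comp_eval hf').sub (integrable_const _)).abs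
  have hIdiff : Integrable (fun z : ι → α => ∑ j, p j * |f (z j) - f' (z j)|)
      (Measure.pi fun _ => μ) :=
    integrable_weighted_sum_comp_eval hdiff
  have hIerr : Integrable (fun z : ι → α => ∑ j, p j * |f (z j) - f' (z j)| + ∫ t, |f t - f' t| ∂μ)
      (Measure.pi fun _ => μ) :=
    hIdiff.add (integrable_const _)
  calc _ ≤ ∫ z, (|∑ j, p j * f' (z j) - ∫ t, f' t ∂μ| +
          (∑ j, p j * |f (z j) - f' (z j)| + ∫ t, |f t - f' t| ∂μ)) ∂(Measure.pi fun _ : ι => μ) :=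
        integral_mono_of_nonneg (ae_of_all _ fun _ => abs_nonneg _)
          (hI'.add hIerr) (ae_of_all _ hpoint)
    _ = _ := by
        rw [integral_add hI' hIerr,
          integral_add hIdiff (integrable_const _), integral_weighted_sum_comp_eval hp1 hdiff]
        simp [two_mul]

end WeightedSampleMean

theorem tendsto_integral_abs_weighted_sum_sub {α : Type*} [MeasurableSpace α] {μ : Measure α}
    [IsProbabilityMeasure μ] {κ : Type*} {l : Filter κ} {ι : κ → Type*} [∀ n, Fintype (ι n)]
    (p : ∀ n, ι n → ℝ) (hp0 : ∀ n j, 0 ≤ p n j) (hp1 : ∀ n, ∑ j, p n j = 1)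
    (hpmax : ∀ ε > 0, ∀ᶠ n in l, ∀ j, p n j ≤ ε) {f : α → ℝ} (hf : Integrable f μ) :
    Tendsto (fun n => ∫ z, |∑ j, p n j * f (z j) - ∫ t, f t ∂μ| ∂(Measure.pi fun _ : ι n => μ))
      l (𝓝 0) := by
  refine Metric.tendsto_nhds.mpr fun ε hε => ?_
  obtain ⟨A, hA⟩ := ((tendsto_integral_abs_sub_truncation hf).eventually
    (gt_mem_nhds (show (0 : ℝ) < ε / 4 by positivity))).exists
  have hδ : 0 < (ε / (2 * (|A| + 1))) ^ 2 := by positivity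
  filter_upwards [hpmax _ hδ] with n hpn
  have hsmall : |A| * √((ε / (2 * (|A| + 1))) ^ 2) < ε / 2 := by
    rw [Real.sqrt_sq (by positivity), mul_div_assoc', div_lt_iff₀ (by positivity)]
    nlinarith [abs_nonneg A]
  have happrox := integral_abs_weighted_sum_sub_le_add (hp0 n) (hp1 n) hf
    (hf.1.integrable_truncation (A := A))
  have htrunc := integral_abs_weighted_sum_sub_le_of_abs_le (hp0 n) (hp1 n) hpn
    hf.1.truncation (abs_truncation_le_bound f A)
  rw [Real.dist_eq, sub_zero, abs_of_nonneg (integral_nonneg fun _ => abs_nonneg _)]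
  linarith

lemma abs_sum_mul_le_mul_sum {ι : Type*} [Fintype ι] {w y : ι → ℝ} {C : ℝ}
    (hw : ∀ j, 0 ≤ w j) (hy : ∀ j, |y j| ≤ C) : |∑ j, w j * y j| ≤ C * ∑ j, w j := by
  refine (Finset.abs_sum_le_sum_abs _ _).trans ?_
  rw [Finset.mul_sum]
  refine Finset.sum_le_sum fun j _ => ?_
  rw [abs_mul, abs_of_nonneg (hw j), mul_comm]
  exact mul_le_mul_of_nonneg_right (hy j) (hw j)

lemma sum_mul_pos_of_pos {ι : Type*} [Fintype ι] {p x : ι → ℝ} (hp0 : ∀ j, 0 ≤ p j)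
    (hp : 0 < ∑ j, p j) (hx : ∀ j, 0 < x j) : 0 < ∑ j, p j * x j := by
  obtain ⟨j, -, hj⟩ := Finset.exists_ne_zero_of_sum_ne_zero hp.ne'
  exact Finset.sum_pos' (fun j _ => mul_nonneg (hp0 j) (hx j).le)
    ⟨j, Finset.mem_univ _, mul_pos ((hp0 j).lt_of_ne' hj) (hx j)⟩

lemma abs_div_sub_div_le {u s a m C : ℝ} (hs : 0 < s) (hm : 0 < m) (hu : |u| ≤ C * s) :
    |u / s - a / m| ≤ (|u - a| + C * |s - m|) / m := by
  have hid : u / s - a / m = ((u - a) + u / s * (m - s)) / m := by field_simp; ring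
  have hus : |u / s| ≤ C := by rwa [abs_div, abs_of_pos hs, div_le_iff₀ hs]
  rw [hid, abs_div, abs_of_pos hm, abs_sub_comm s m]
  gcongr
  calc |(u - a) + u / s * (m - s)| ≤ |u - a| + |u / s| * |m - s| := by
        rw [← abs_mul]; exact abs_add_le _ _
    _ ≤ |u - a| + C * |m - s| := by gcongr

theorem tendsto_integral_div_of_tendsto_integral_abs_sub {κ : Type*} {l : Filter κ}
    {Ω : κ → Type*} [∀ n, MeasurableSpace (Ω n)] {P : ∀ n, Measure (Ω n)}
    [∀ n, IsProbabilityMeasure (P n)] {U S : ∀ n, Ω n → ℝ} {a m C : ℝ} (hm : 0 < m)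
    (hU : ∀ n, Integrable (U n) (P n)) (hS : ∀ n, Integrable (S n) (P n))
    (hSpos : ∀ n, ∀ᵐ ω ∂P n, 0 < S n ω) (hUS : ∀ n, ∀ᵐ ω ∂P n, |U n ω| ≤ C * S n ω)
    (hUa : Tendsto (fun n => ∫ ω, |U n ω - a| ∂P n) l (𝓝 0))
    (hSm : Tendsto (fun n => ∫ ω, |S n ω - m| ∂P n) l (𝓝 0)) :
    Tendsto (fun n => ∫ ω, U n ω / S n ω ∂P n) l (𝓝 (a / m)) := by
  have hbound : ∀ n, |∫ ω, U n ω / S n ω ∂P n - a / m| ≤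
      ((∫ ω, |U n ω - a| ∂P n) + C * ∫ ω, |S n ω - m| ∂P n) / m := by
    intro n
    have hR : Integrable (fun ω => U n ω / S n ω) (P n) :=
      Integrable.mono' (integrable_const C)
        ((hU n).1.aemeasurable.div (hS n).1.aemeasurable).aestronglyMeasurable <| by
        filter_upwards [hSpos n, hUS n] with ω hSω hUω
        rwa [Real.norm_eq_abs, abs_div, abs_of_pos hSω, div_le_iff₀ hSω]
    have hUa_int : Integrable (fun ω => |U n ω - a|) (P n) := ((hU n).sub (integrable_const a)).abs
    have hSm_int : Integrable (fun ω => |S n ω - m|) (P n) := ((hS n).sub (integrable_const m)).abs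
    calc |∫ ω, U n ω / S n ω ∂P n - a / m| = |∫ ω, (U n ω / S n ω - a / m) ∂P n| := by
          rw [integral_sub hR (integrable_const _), integral_const, probReal_univ, one_smul]
      _ ≤ ∫ ω, |U n ω / S n ω - a / m| ∂P n := abs_integral_le_integral_abs
      _ ≤ ∫ ω, (|U n ω - a| + C * |S n ω - m|) / m ∂P n :=
          integral_mono_of_nonneg (ae_of_all _ fun _ => abs_nonneg _)
            ((hUa_int.add (hSm_int.const_mul C)).div_const m) <| by
              filter_upwards [hSpos n, hUS n] with ω hSω hUω using abs_div_sub_div_le hSω hm hUω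
      _ = _ := by rw [integral_div, integral_add hUa_int (hSm_int.const_mul C), integral_const_mul]
  have hlim : Tendsto (fun n => ((∫ ω, |U n ω - a| ∂P n) + C * ∫ ω, |S n ω - m| ∂P n) / m) l
      (𝓝 0) := by
    simpa using (hUa.add (hSm.const_mul C)).div_const m
  exact tendsto_iff_norm_sub_tendsto_zero.2 (squeeze_zero (fun _ => norm_nonneg _) hbound hlim)

/-- Size-biased sampling with arbitrary extra weights: if `ν₀` is a Borel
probability measure on `(0,∞)` with finite expectation `m`, `ν` its size-biased version
(`ν(A) = (1/m) ∫_A t dν₀`), and `(p^n)` a proper sequence of probability vectors, then the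
law `η_n` of the size-biased random choice from i.i.d. `Z_1, …, Z_{N_n} ∼ ν₀` with extra
weights `p^n` converges weakly to `ν`: for every bounded continuous `g` on `(0,∞)`,
`∫ g dη_n = E[(∑_j p^n_j Z_j g(Z_j)) / (∑_j p^n_j Z_j)] → ∫ g dν = (1/m) ∫ t g(t) dν₀`. -/
theorem size_biased_sampling_weak_convergence
    (ν₀ : Measure ℝ) [IsProbabilityMeasure ν₀] (hsupp : ν₀ (Set.Ioi 0)ᶜ = 0)
    (m : ℝ) (hint : Integrable (fun t : ℝ => t) ν₀) (hm : ∫ t, t ∂ν₀ = m)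
    (N : ℕ → ℕ) (p : ∀ n : ℕ, Fin (N n) → ℝ)
    (hp0 : ∀ n j, 0 ≤ p n j) (hp1 : ∀ n, ∑ j, p n j = 1)
    (hpmax : ∀ ε > 0, ∀ᶠ n in atTop, ∀ j, p n j ≤ ε)
    (g : ℝ → ℝ) (hgc : ContinuousOn g (Set.Ioi 0)) (hgb : ∃ C, ∀ t ∈ Set.Ioi (0:ℝ), |g t| ≤ C) :
    Tendsto
      (fun n => ∫ z,
          (∑ j, p n j * z j * g (z j)) / (∑ j, p n j * z j)
            ∂(Measure.pi fun _ : Fin (N n) => ν₀))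
      atTop (nhds ((1 / m) * ∫ t, t * g t ∂ν₀)) := by
  obtain ⟨C, hC⟩ := hgb
  have hpos : ∀ᵐ t ∂ν₀, t ∈ Ioi (0 : ℝ) := hsupp
  have hm0 : 0 < m := by
    have hIoi : ν₀ (Ioi 0) = 1 := (prob_compl_eq_zero_iff measurableSet_Ioi).1 hsupp
    rw [← hm, integral_pos_iff_support_of_nonneg_ae (hpos.mono fun _ ht => le_of_lt ht) hint]
    exact (zero_lt_one.trans_eq hIoi.symm).trans_le (measure_mono fun t (ht : 0 < t) => ht.ne')
  have hg : AEStronglyMeasurable g ν₀ := by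
    simpa [Measure.restrict_eq_self_of_ae_mem hpos] using
      hgc.aestronglyMeasurable measurableSet_Ioi (μ := ν₀)
  have htg : Integrable (fun t => t * g t) ν₀ := hint.mul_bdd hg (hpos.mono hC)
  have hcoord : ∀ n, ∀ᵐ z ∂(Measure.pi fun _ : Fin (N n) => ν₀), ∀ j, 0 < z j := fun n =>
    ae_all_iff.2 fun j => (Measure.quasiMeasurePreserving_eval _ j).ae hpos
  rw [one_div_mul_eq_div]
  refine tendsto_integral_div_of_tendsto_integral_abs_sub (C := C) hm0 ?_ ?_ ?_ ?_ ?_ ?_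
  · simpa only [mul_assoc] using fun n => integrable_weighted_sum_comp_eval (p := p n) htg
  · exact fun n => integrable_weighted_sum_comp_eval hint
  · exact fun n => (hcoord n).mono fun z hz => sum_mul_pos_of_pos (hp0 n) (by simp [hp1]) hz
  · exact fun n => (hcoord n).mono fun z hz =>
      abs_sum_mul_le_mul_sum (fun j => mul_nonneg (hp0 n j) (hz j).le) fun j => hC _ (hz j)
  · simpa only [mul_assoc] using tendsto_integral_abs_weighted_sum_sub p hp0 hp1 hpmax htg
  · simpa only [hm] using tendsto_integral_abs_weighted_sum_sub p hp0 hp1 hpmax hint
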